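/- Let α ≥ 0, γ ≥ 1 be real, β ∈ ℂ with β ≠ 0 and γ+α ≥ 3|β|, and let m ≥ 0. Then for all z in the open unit disc, Re(𝓡'_{α,β,γ}(z) / (𝓡_{α,β,γ})'_m(z)) ≥ (γ+α−3|β|)/(γ+α−|β|). -/

import Mathlib

open Complex

noncomputable def rabA (α γ : ℝ) (β : ℂ) (n : ℕ) : ℂ :=
  β ^ n * (Real.Gamma (γ + α) : ℂ) / (Real.Gamma ((γ + α) * (n + 1)) : ℂ)

noncomputable def rab (α γ : ℝ) (β : ℂ) (z : ℂ) : ℂ :=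
  z + ∑' k : ℕ, rabA α γ β (k + 1) * z ^ (k + 2)

noncomputable def rabPartial (α γ : ℝ) (β : ℂ) (m : ℕ) (z : ℂ) : ℂ :=
  z + ∑ k ∈ Finset.range m, rabA α γ β (k + 1) * z ^ (k + 2)

noncomputable def rabD (α γ : ℝ) (β : ℂ) (z : ℂ) : ℂ :=
  1 + ∑' k : ℕ, ((k : ℂ) + 2) * rabA α γ β (k + 1) * z ^ (k + 1)

noncomputable def rabDPartial (α γ : ℝ) (β : ℂ) (m : ℕ) (z : ℂ) : ℂ :=
  1 + ∑ k ∈ Finset.range m, ((k : ℂ) + 2) * rabA α γ β (k + 1) * z ^ (k + 1)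

noncomputable def rabAlex (α γ : ℝ) (β : ℂ) (z : ℂ) : ℂ :=
  z + ∑' k : ℕ, rabA α γ β (k + 1) / ((k : ℂ) + 2) * z ^ (k + 2)

noncomputable def rabAlexPartial (α γ : ℝ) (β : ℂ) (m : ℕ) (z : ℂ) : ℂ :=
  z + ∑ k ∈ Finset.range m, rabA α γ β (k + 1) / ((k : ℂ) + 2) * z ^ (k + 2)

/-!
With `c = γ + α ≥ 1`, `xΓ(x) = Γ(x+1)` and the monotonicity of `Γ` on `[2, ∞)` give
`Γ(c(n+1)) ≥ cⁿ n! Γ(c)`, so the `k`-th term of `𝓡'` has norm at most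
`(k+2)/(k+1)! · qᵏ⁺¹ ≤ 2 qᵏ⁺¹` with `q = |β| |z| / c ≤ |β| / c ≤ 1/3`.
Hence the terms have total norm `N ≤ 2q/(1-q) < 1`. Writing `u = 𝓡'(z)` and `v = (𝓡)'ₘ(z)`,
if `σ` is the norm of the first `m` terms, then `|v| ≥ 1 - σ` and `|u - v| ≤ N - σ`, so
`Re(u/v) ≥ 1 - (N - σ)/(1 - σ) ≥ 1 - N ≥ 1 - 2q/(1-q) ≥ (c - 3|β|)/(c - |β|)`.
-/

open Finset
open scoped Nat

lemma Real.mul_Gamma_le_Gamma_add {x c : ℝ} (hx : 1 ≤ x) (hc : 1 ≤ c) :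
    x * Real.Gamma x ≤ Real.Gamma (x + c) := by
  rw [← Real.Gamma_add_one (by positivity)]
  exact Real.Gamma_strictMonoOn_Ici.monotoneOn (Set.mem_Ici.2 (by linarith))
    (Set.mem_Ici.2 (by linarith)) (by linarith)

lemma Real.pow_mul_factorial_mul_Gamma_le {c : ℝ} (hc : 1 ≤ c) (n : ℕ) :
    c ^ n * n ! * Real.Gamma c ≤ Real.Gamma (c * (n + 1)) := by
  induction n with
  | zero => simp
  | succ n ih =>
    have hx : 1 ≤ c * (n + 1) := by nlinarith [(n.cast_nonneg : (0 : ℝ) ≤ n)]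
    calc c ^ (n + 1) * (n + 1)! * Real.Gamma c
        = c * (n + 1) * (c ^ n * n ! * Real.Gamma c) := by
          push_cast [Nat.factorial_succ]; ring
      _ ≤ c * (n + 1) * Real.Gamma (c * (n + 1)) := by gcongr
      _ ≤ Real.Gamma (c * (n + 1) + c) := Real.mul_Gamma_le_Gamma_add hx hc
      _ = Real.Gamma (c * ((n + 1 : ℕ) + 1)) := by push_cast; ring_nf

lemma norm_rabA_le {α γ : ℝ} (hc : 1 ≤ γ + α) (β : ℂ) (n : ℕ) :
    ‖rabA α γ β n‖ ≤ (‖β‖ / (γ + α)) ^ n / n ! := by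
  have hΓc : 0 < Real.Gamma (γ + α) := Real.Gamma_pos_of_pos (by linarith)
  have hΓ : 0 < Real.Gamma ((γ + α) * (n + 1)) := Real.Gamma_pos_of_pos (by positivity)
  rw [rabA, norm_div, norm_mul, norm_pow, norm_real, norm_real, Real.norm_of_nonneg hΓc.le,
    Real.norm_of_nonneg hΓ.le, div_le_div_iff₀ hΓ (by positivity), div_pow]
  calc ‖β‖ ^ n * Real.Gamma (γ + α) * n !
      = ‖β‖ ^ n / (γ + α) ^ n * ((γ + α) ^ n * n ! * Real.Gamma (γ + α)) := by
        field_simp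
    _ ≤ ‖β‖ ^ n / (γ + α) ^ n * Real.Gamma ((γ + α) * (n + 1)) := by
        gcongr; exact Real.pow_mul_factorial_mul_Gamma_le hc n

lemma norm_rabD_term_le {α γ : ℝ} (hc : 1 ≤ γ + α) (β z : ℂ) (k : ℕ) :
    ‖((k : ℂ) + 2) * rabA α γ β (k + 1) * z ^ (k + 1)‖ ≤
      2 * (‖β‖ * ‖z‖ / (γ + α)) ^ (k + 1) := by
  have hk : ((k : ℝ) + 2) ≤ 2 * (k + 1)! := by
    have : ((k + 1 : ℕ) : ℝ) ≤ (k + 1)! := by exact_mod_cast Nat.self_le_factorial (k + 1)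
    push_cast at this; linarith
  have hnorm : ‖(k : ℂ) + 2‖ = (k : ℝ) + 2 := by exact_mod_cast norm_natCast (k + 2)
  rw [norm_mul, norm_mul, norm_pow, hnorm, mul_div_right_comm, mul_pow]
  calc ((k : ℝ) + 2) * ‖rabA α γ β (k + 1)‖ * ‖z‖ ^ (k + 1)
      ≤ 2 * (k + 1)! * ((‖β‖ / (γ + α)) ^ (k + 1) / (k + 1)!) * ‖z‖ ^ (k + 1) := by
        gcongr; exact norm_rabA_le hc β (k + 1)
    _ = 2 * ((‖β‖ / (γ + α)) ^ (k + 1) * ‖z‖ ^ (k + 1)) := by field_simp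

lemma summable_norm_and_tsum_norm_le_of_le_geometric {E : Type*} [SeminormedAddCommGroup E]
    {f : ℕ → E} {C q : ℝ} (hq₀ : 0 ≤ q) (hq₁ : q < 1) (hf : ∀ k, ‖f k‖ ≤ C * q ^ (k + 1)) :
    Summable (fun k ↦ ‖f k‖) ∧ ∑' k, ‖f k‖ ≤ C * q / (1 - q) := by
  have hgeom : HasSum (fun k ↦ C * q ^ (k + 1)) (C * q / (1 - q)) := by
    have h := (hasSum_geometric_of_lt_one hq₀ hq₁).mul_left (C * q)
    rw [← div_eq_mul_inv] at h
    simpa only [pow_succ', mul_assoc] using h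
  have hs := hgeom.summable.of_nonneg_of_le (fun _ ↦ norm_nonneg _) hf
  exact ⟨hs, hasSum_le hf hs.hasSum hgeom⟩

lemma one_sub_tsum_norm_le_re_div {f : ℕ → ℂ} (hf : Summable fun k ↦ ‖f k‖)
    (hN : ∑' k, ‖f k‖ < 1) (m : ℕ) :
    1 - ∑' k, ‖f k‖ ≤ ((1 + ∑' k, f k) / (1 + ∑ k ∈ range m, f k)).re := by
  set u := 1 + ∑' k, f k
  set v := 1 + ∑ k ∈ range m, f k
  set σ := ∑ k ∈ range m, ‖f k‖
  have hσ₀ : 0 ≤ σ := sum_nonneg fun _ _ ↦ norm_nonneg _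
  have hσN : σ ≤ ∑' k, ‖f k‖ := hf.sum_le_tsum _ fun _ _ ↦ norm_nonneg _
  have hv : 1 - σ ≤ ‖v‖ := by
    have := norm_sub_norm_le (1 : ℂ) (-∑ k ∈ range m, f k)
    rw [norm_one, norm_neg, sub_neg_eq_add] at this
    linarith [norm_sum_le (range m) f]
  have hv₀ : v ≠ 0 := norm_pos_iff.1 (by linarith)
  have htail : ‖u - v‖ ≤ ∑' k, ‖f k‖ - σ := by
    have hu : u - v = ∑' k, f (k + m) := by
      simp only [u, v, ← hf.of_norm.sum_add_tsum_nat_add m]; ring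
    rw [hu, ← hf.sum_add_tsum_nat_add m, add_sub_cancel_left]
    exact norm_tsum_le_tsum_norm ((summable_nat_add_iff m).2 hf)
  calc 1 - ∑' k, ‖f k‖
      ≤ 1 - (∑' k, ‖f k‖ - σ) / (1 - σ) := by
        gcongr; rw [div_le_iff₀ (by linarith)]; nlinarith
    _ ≤ 1 - ‖(u - v) / v‖ := by
        rw [norm_div]; gcongr; linarith
    _ ≤ 1 + ((u - v) / v).re := by
        linarith [neg_abs_le ((u - v) / v).re, abs_re_le_norm ((u - v) / v)]
    _ = (u / v).re := by rw [sub_div, div_self hv₀, sub_re, one_re]; ring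

theorem rabD_partial_re_general (α γ : ℝ) (β : ℂ) (hα : 0 ≤ α) (hγ : 1 ≤ γ)
    (hβ : 3 * ‖β‖ ≤ γ + α) (m : ℕ) (z : ℂ)
    (hz : ‖z‖ < 1) :
    (γ + α - 3 * ‖β‖) / (γ + α - ‖β‖) ≤
      (rabD α γ β z / rabDPartial α γ β m z).re := by
  have hc : 1 ≤ γ + α := by linarith
  set t := ‖β‖ / (γ + α)
  set q := ‖β‖ * ‖z‖ / (γ + α)
  have ht₀ : 0 ≤ t := by positivity
  have ht : t ≤ 1 / 3 := by rw [div_le_iff₀ (by linarith)]; linarith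
  have hq_eq : q = t * ‖z‖ := mul_div_right_comm _ _ _
  have hq₀ : 0 ≤ q := by positivity
  have hq_third : q < 1 / 3 := by rw [hq_eq]; nlinarith [norm_nonneg z]
  have hq_le : q ≤ t := hq_eq ▸ mul_le_of_le_one_right ht₀ hz.le
  obtain ⟨hs, hN⟩ := summable_norm_and_tsum_norm_le_of_le_geometric hq₀ (by linarith)
    (norm_rabD_term_le hc β z)
  have hqN : 2 * q / (1 - q) < 1 := by rw [div_lt_one (by linarith)]; linarith
  calc (γ + α - 3 * ‖β‖) / (γ + α - ‖β‖) = 1 - 2 * t / (1 - t) := by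
        have : γ + α - ‖β‖ ≠ 0 := by linarith [norm_nonneg β]
        have : γ + α ≠ 0 := by linarith
        simp only [t]
        field_simp
        ring
    _ ≤ 1 - 2 * q / (1 - q) := by
        gcongr
        linarith
    _ ≤ 1 - ∑' k : ℕ, ‖((k : ℂ) + 2) * rabA α γ β (k + 1) * z ^ (k + 1)‖ := by linarith
    _ ≤ (rabD α γ β z / rabDPartial α γ β m z).re :=
        one_sub_tsum_norm_le_re_div hs (by linarith) m

theorem rabD_partial_re (α γ : ℝ) (β : ℂ) (hα : 0 ≤ α) (hγ : 1 ≤ γ)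
    (hβ0 : β ≠ 0) (hβ : 3 * ‖β‖ ≤ γ + α) (m : ℕ) (z : ℂ)
    (hz : ‖z‖ < 1) :
    (γ + α - 3 * ‖β‖) / (γ + α - ‖β‖) ≤
      (rabD α γ β z / rabDPartial α γ β m z).re :=
  rabD_partial_re_general α γ β hα hγ hβ m z hz
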